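/- arXiv:1603.08133 — 2 statements merged into one kernel-verified Lean document; each statement's English description precedes it below -/
import Mathlib

section
/- Let k be a field of characteristic p > 0 and let R_p be the (p-2)-dimensional representation of S_p given by functions on {1,...,p} with zero sum of values, modulo constants. Then the Dynkin element θ_p acts by zero on R_p. -/
open MonoidAlgebra

noncomputable def cycleDown (n j : ℕ) : Equiv.Perm (Fin n) :=
  if h : j < n then ((⟨j, h⟩ : Fin n).cycleRange)⁻¹ else 1

/-- The Dynkin element `θ_n = (1 - (2 1))(1 - (3 2 1)) ⋯ (1 - (n ... 1))`. -/
noncomputable def dynkin (R : Type) [CommRing R] (n : ℕ) :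
    MonoidAlgebra R (Equiv.Perm (Fin n)) :=
  ((List.range (n - 1)).map (fun j =>
    (1 : MonoidAlgebra R (Equiv.Perm (Fin n))) -
      MonoidAlgebra.of R (Equiv.Perm (Fin n)) (cycleDown n (j + 1)))).prod

/-- The action of an element of the group ring `k[S_n]` on functions `Fin n → k`,
where a permutation `σ` acts by `(σ • f) i = f (σ⁻¹ i)`. -/
noncomputable def grpAct {k : Type} [CommRing k] {n : ℕ}
    (a : MonoidAlgebra k (Equiv.Perm (Fin n))) (f : Fin n → k) : Fin n → k :=
  fun i => a.coeff.sum fun σ c => c * f (σ⁻¹ i)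

/-! Write `ρⱼ` for the cycle `(0 1 ⋯ j)`, so that the `j`-th factor of `θ` sends `f` to
`f - f ∘ ρⱼ`, and put `Dₘ f = ∑ₜ (-1)ᵗ C(m, t) f(t)` (`altChooseSum`). Pascal's rule gives
`Dₘ (f - f ∘ ρₘ₊₁) = Dₘ₊₁ f`, so by induction the product of the first `m ≥ 1` factors sends
`f` to `Dₘ f • (δ₀ - δ₁)`, where `δ₀ - δ₁ = ((-1)ⁱ C(1, i))ᵢ`. In characteristic `p` we have
`(-1)ᵗ C(p - 1, t) = 1` for `t < p`, so `θ_p f = (∑ f) • (δ₀ - δ₁)`, which vanishes on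
zero-sum functions. -/

section

variable {k : Type} [CommRing k] {n : ℕ}

variable (k) in
def permFunRep (α : Type*) : Representation k (Equiv.Perm α) (α → k) where
  toFun σ := LinearMap.funLeft k k ⇑σ⁻¹
  map_one' := rfl
  map_mul' _ _ := rfl

theorem grpAct_eq_asAlgebraHom (a : MonoidAlgebra k (Equiv.Perm (Fin n))) (f : Fin n → k) :
    grpAct a f = (permFunRep k (Fin n)).asAlgebraHom a f := by
  ext i
  simp [grpAct, Representation.asAlgebraHom_def, MonoidAlgebra.lift_apply, Finsupp.sum,
    permFunRep, LinearMap.funLeft]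

theorem grpAct_mul (a b : MonoidAlgebra k (Equiv.Perm (Fin n))) (f : Fin n → k) :
    grpAct (a * b) f = grpAct a (grpAct b f) := by
  simp only [grpAct_eq_asAlgebraHom, map_mul, Module.End.mul_apply]

theorem grpAct_one_sub_of (σ : Equiv.Perm (Fin n)) (f : Fin n → k) :
    grpAct (1 - MonoidAlgebra.of k _ σ) f = fun i => f i - f (σ⁻¹ i) := by
  simp only [grpAct_eq_asAlgebraHom, map_sub, map_one, Representation.asAlgebraHom_of]
  rfl

theorem grpAct_one_sub_cycleDown {j : ℕ} (hj : j < n) (f : Fin n → k) :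
    grpAct (1 - MonoidAlgebra.of k _ (cycleDown n j)) f =
      fun i => f i - f ((⟨j, hj⟩ : Fin n).cycleRange i) := by
  rw [grpAct_one_sub_of, cycleDown, dif_pos hj, inv_inv]

variable (k) in
noncomputable def dynkinPartial (n m : ℕ) : MonoidAlgebra k (Equiv.Perm (Fin n)) :=
  ((List.range m).map (fun j =>
    (1 : MonoidAlgebra k (Equiv.Perm (Fin n))) - MonoidAlgebra.of k _ (cycleDown n (j + 1)))).prod

theorem dynkin_eq_dynkinPartial : dynkin k n = dynkinPartial k n (n - 1) := rfl

theorem dynkinPartial_succ (m : ℕ) :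
    dynkinPartial k n (m + 1) =
      dynkinPartial k n m * (1 - MonoidAlgebra.of k _ (cycleDown n (m + 1))) := by
  rw [dynkinPartial, dynkinPartial, List.range_succ, List.map_append, List.prod_append,
    List.map_singleton, List.prod_singleton]

variable (k) in
def altChoose (m t : ℕ) : k := (-1) ^ t * m.choose t

theorem altChoose_succ_succ (m t : ℕ) :
    altChoose k (m + 1) (t + 1) = altChoose k m (t + 1) - altChoose k m t := by
  simp only [altChoose, Nat.choose_succ_succ', Nat.cast_add, pow_succ]
  ring

theorem altChoose_of_lt {m t : ℕ} (h : m < t) : altChoose k m t = 0 := by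
  simp [altChoose, Nat.choose_eq_zero_of_lt h]

theorem altChoose_pred_prime {p : ℕ} [CharP k p] (hp : p.Prime) {t : ℕ} (ht : t < p) :
    altChoose k (p - 1) t = 1 := by
  induction t with
  | zero => simp [altChoose]
  | succ t ih =>
    have hchoose : altChoose k p (t + 1) = 0 := by
      simp only [altChoose, (CharP.cast_eq_zero_iff k p _).2 (hp.dvd_choose_self t.succ_ne_zero ht),
        mul_zero]
    rw [← Nat.sub_add_cancel hp.one_le, altChoose_succ_succ, sub_eq_zero] at hchoose
    rw [hchoose, ih (by omega)]

theorem altChoose_cycleRange {m : ℕ} (hm : m + 1 < n) (t : Fin n) :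
    altChoose k m ((⟨m + 1, hm⟩ : Fin n).cycleRange t) - altChoose k m t =
      altChoose k (m + 1) ((⟨m + 1, hm⟩ : Fin n).cycleRange t) := by
  rcases lt_trichotomy t ⟨m + 1, hm⟩ with ht | rfl | ht
  · rw [Fin.coe_cycleRange_of_lt ht, altChoose_succ_succ]
  · rw [Fin.coe_cycleRange_of_le le_rfl, if_pos rfl, altChoose_of_lt (Nat.lt_succ_self m)]
    simp [altChoose]
  · rw [Fin.cycleRange_of_gt ht, sub_self, altChoose_of_lt (Fin.lt_def.1 ht)]

variable (k) in
def altChooseSum (m : ℕ) (f : Fin n → k) : k := ∑ t : Fin n, altChoose k m t * f t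

theorem altChooseSum_sub_comp_cycleRange {m : ℕ} (hm : m + 1 < n) (f : Fin n → k) :
    altChooseSum k m (fun i => f i - f ((⟨m + 1, hm⟩ : Fin n).cycleRange i)) =
      altChooseSum k (m + 1) f := by
  set ρ := (⟨m + 1, hm⟩ : Fin n).cycleRange
  calc ∑ t : Fin n, altChoose k m t * (f t - f (ρ t))
      = ∑ t : Fin n, (altChoose k m (ρ t) * f (ρ t) - altChoose k m t * f (ρ t)) := by
        rw [Finset.sum_sub_distrib, Equiv.sum_comp ρ (fun t => altChoose k m t * f t),
          ← Finset.sum_sub_distrib]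
        simp only [mul_sub]
    _ = ∑ t : Fin n, altChoose k (m + 1) (ρ t) * f (ρ t) := by
        refine Finset.sum_congr rfl fun t _ => ?_
        rw [← sub_mul, altChoose_cycleRange]
    _ = altChooseSum k (m + 1) f := Equiv.sum_comp ρ (fun t => altChoose k (m + 1) t * f t)

theorem altChooseSum_zero (hn : 0 < n) (f : Fin n → k) : altChooseSum k 0 f = f ⟨0, hn⟩ := by
  rw [altChooseSum, Fintype.sum_eq_single ⟨0, hn⟩ fun t ht => ?_]
  · simp [altChoose]
  · rw [altChoose_of_lt (Nat.pos_of_ne_zero fun h => ht (Fin.ext h)), zero_mul]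

theorem grpAct_dynkinPartial_one (hn : 1 < n) (f : Fin n → k) :
    grpAct (dynkinPartial k n 1) f = fun i : Fin n => altChooseSum k 1 f * altChoose k 1 i := by
  have hρ0 : (⟨1, hn⟩ : Fin n).cycleRange ⟨0, by omega⟩ = ⟨1, hn⟩ :=
    Fin.ext (Fin.coe_cycleRange_of_lt (Fin.mk_lt_mk.2 Nat.one_pos))
  have hρ1 : (⟨1, hn⟩ : Fin n).cycleRange ⟨1, hn⟩ = ⟨0, by omega⟩ :=
    Fin.ext (Fin.coe_cycleRange_of_le le_rfl)
  -- `D₁ f = D₀ (f - f ∘ ρ₁) = f 0 - f 1`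
  rw [← zero_add 1, dynkinPartial_succ, zero_add, ← altChooseSum_sub_comp_cycleRange hn,
    altChooseSum_zero (by omega)]
  simp only [dynkinPartial, List.range_zero, List.map_nil, List.prod_nil, one_mul,
    grpAct_one_sub_cycleDown hn, hρ0]
  funext ⟨i, hi⟩
  rcases i with _ | _ | i
  · simp [altChoose, hρ0]
  · rw [hρ1]
    simp [altChoose]
  · rw [Fin.cycleRange_of_gt (Fin.mk_lt_mk.2 (by omega)), altChoose_of_lt (by simp)]
    ring

theorem grpAct_dynkinPartial {m : ℕ} (hm : 1 ≤ m) (hmn : m < n) (f : Fin n → k) :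
    grpAct (dynkinPartial k n m) f = fun i : Fin n => altChooseSum k m f * altChoose k 1 i := by
  induction m, hm using Nat.le_induction generalizing f with
  | base => exact grpAct_dynkinPartial_one hmn f
  | succ m hm ih =>
    rw [dynkinPartial_succ, grpAct_mul, grpAct_one_sub_cycleDown hmn, ih (by omega),
      altChooseSum_sub_comp_cycleRange]

end

/-- over a field of characteristic `p > 0`, the Dynkin element `θ_p`
acts by zero on `R_p`, the zero-sum functions on `{1,…,p}` modulo constants: applied
to any zero-sum function it yields a constant function. -/
theorem dynkin_acts_zero_on_Rp (k : Type) [Field k] (p : ℕ) [Fact p.Prime] [CharP k p]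
    (f : Fin p → k) (hf : ∑ i, f i = 0) :
    ∃ c : k, grpAct (dynkin k p) f = fun _ => c := by
  have hp : p.Prime := Fact.out
  have hsum : altChooseSum k (p - 1) f = 0 := by
    rw [← hf]
    exact Finset.sum_congr rfl fun t _ => by rw [altChoose_pred_prime hp t.isLt, one_mul]
  refine ⟨0, ?_⟩
  rw [dynkin_eq_dynkinPartial, grpAct_dynkinPartial (Nat.le_sub_one_of_lt hp.one_lt)
    (Nat.sub_one_lt hp.ne_zero), hsum]
  simp
end

section
/- Let V be a finite-dimensional vector space (or more generally an object of a symmetric tensor category) over a field of characteristic p > 0. Then the De Rham cohomology H^*(Ω^•(V)) is concentrated in diagonal degrees divisible by p. -/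
set_option maxHeartbeats 1000000


open TensorProduct

noncomputable section

variable (k : Type) [Field k] (m : ℕ)

/-- Polynomial functions on `V^* = k^m`, i.e. the symmetric algebra `SV` of `V = k^m`. -/
abbrev PolyV := MvPolynomial (Fin m) k

/-- The exterior algebra `ΛV` of `V = k^m`. -/
abbrev ExtV := ExteriorAlgebra k (Fin m → k)

/-- The De Rham complex `Ω^•(V) = SV ⊗ Λ^•V` (as a single module; the exterior
degree gives the homological grading). -/
abbrev DeRham := PolyV k m ⊗[k] ExtV k m

/-- The exterior (De Rham) differential `d(f ⊗ ω) = Σᵢ ∂f/∂xᵢ ⊗ dxᵢ ∧ ω`. -/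
def dDR : DeRham k m →ₗ[k] DeRham k m :=
  ∑ i : Fin m,
    TensorProduct.map ((MvPolynomial.pderiv i).toLinearMap)
      (LinearMap.mulLeft k (ExteriorAlgebra.ι k (Pi.single i 1)))

/-- The component of `SV ⊗ ΛV` of polynomial degree `a` and exterior degree `b`. -/
def compTensor (a b : ℕ) : Submodule k (DeRham k m) :=
  LinearMap.range (TensorProduct.map
    (Submodule.subtype (MvPolynomial.homogeneousSubmodule (Fin m) k a))
    (Submodule.subtype (⋀[k]^b (Fin m → k))))

/-- The diagonal-degree-`d` component of the De Rham complex (`V` has degree 1 in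
both the symmetric and the exterior factor). -/
def diagComp (d : ℕ) : Submodule k (DeRham k m) :=
  ⨆ (a : ℕ) (_ : a ≤ d), compTensor k m a (d - a)

def hK : DeRham k m →ₗ[k] DeRham k m :=
  ∑ i : Fin m,
    TensorProduct.map (LinearMap.mulLeft k (MvPolynomial.X i))
      (CliffordAlgebra.contractLeft (LinearMap.proj i) :
        ExtV k m →ₗ[k] ExtV k m)

lemma euler_monomial (s : Fin m →₀ ℕ) (c : k) (i : Fin m) :
    MvPolynomial.X i * MvPolynomial.pderiv i (MvPolynomial.monomial s c) =
      (s i) • MvPolynomial.monomial s c := by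
  rw [MvPolynomial.pderiv_monomial]
  by_cases h : s i = 0
  · simp [h]
  · have hs : Finsupp.single i 1 + (s - Finsupp.single i 1) = s := by
      ext j
      rcases eq_or_ne j i with rfl | hj
      · simp only [Finsupp.add_apply, Finsupp.single_eq_same, Finsupp.tsub_apply]
        omega
      · simp [Finsupp.single_apply, (Ne.symm hj)]
    rw [MvPolynomial.X, MvPolynomial.monomial_mul, hs]
    rw [MvPolynomial.smul_monomial]
    congr 1
    simp [mul_comm]

lemma euler_poly (a : ℕ) (f : PolyV k m)
    (hf : f ∈ MvPolynomial.homogeneousSubmodule (Fin m) k a) :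
    ∑ i : Fin m, MvPolynomial.X i * MvPolynomial.pderiv i f = a • f := by
  rw [MvPolynomial.mem_homogeneousSubmodule] at hf
  conv_lhs => rw [f.as_sum]
  conv_rhs => rw [f.as_sum]
  rw [Finset.smul_sum]
  simp_rw [map_sum, Finset.mul_sum]
  rw [Finset.sum_comm]
  refine Finset.sum_congr rfl fun v hv => ?_
  have hdeg : ∑ i : Fin m, v i = a := by
    have := hf (MvPolynomial.mem_support_iff.mp hv)
    rw [← this]
    simp [Finsupp.weight_apply, Finsupp.sum_fintype]
  simp_rw [euler_monomial]
  rw [← Finset.sum_smul, hdeg]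

lemma euler_ext (b : ℕ) (ω : ExtV k m) (hω : ω ∈ ⋀[k]^b (Fin m → k)) :
    ∑ i : Fin m, ExteriorAlgebra.ι k (Pi.single i 1) *
      (CliffordAlgebra.contractLeft (LinearMap.proj i) ω) = b • ω := by
  refine Submodule.pow_induction_on_left'
    (M := LinearMap.range (ExteriorAlgebra.ι k : (Fin m → k) →ₗ[k] ExtV k m))
    (C := fun n x _ => ∑ i : Fin m, ExteriorAlgebra.ι k (Pi.single i 1) *
      (CliffordAlgebra.contractLeft (LinearMap.proj i) x) = n • x) ?_ ?_ ?_ hω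
  · intro r
    simp [CliffordAlgebra.contractLeft_algebraMap]
  · intro x y n hx hy ihx ihy
    simp only [map_add, mul_add, Finset.sum_add_distrib, ihx, ihy, smul_add]
  · rintro v ⟨u, rfl⟩ n x hx ih
    simp only [CliffordAlgebra.contractLeft_ι_mul]
    have hproj : ∀ i : Fin m, (LinearMap.proj i : (Fin m → k) →ₗ[k] k) u = u i := fun _ => rfl
    simp only [hproj, mul_sub]
    rw [Finset.sum_sub_distrib]
    have expand : ExteriorAlgebra.ι k u
        = ∑ i : Fin m, u i • ExteriorAlgebra.ι k (Pi.single i (1:k)) := by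
      conv_lhs => rw [pi_eq_sum_univ u]
      rw [map_sum]
      refine Finset.sum_congr rfl fun i _ => ?_
      rw [map_smul]
      congr 2
      ext j
      simp [Pi.single_apply, eq_comm]
    have h1 : ∑ i : Fin m, ExteriorAlgebra.ι k (Pi.single i 1) * (u i • x)
        = ExteriorAlgebra.ι k u * x := by
      rw [expand, Finset.sum_mul]
      refine Finset.sum_congr rfl fun i _ => ?_
      rw [mul_smul_comm, smul_mul_assoc]
    have h2 : ∀ i : Fin m, ExteriorAlgebra.ι k (Pi.single i 1) * (ExteriorAlgebra.ι k u *
        (CliffordAlgebra.contractLeft (LinearMap.proj i) x)) =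
        -(ExteriorAlgebra.ι k u * (ExteriorAlgebra.ι k (Pi.single i 1) *
          (CliffordAlgebra.contractLeft (LinearMap.proj i) x))) := by
      intro i
      rw [← mul_assoc, ← mul_assoc, ← neg_mul]
      congr 1
      exact eq_neg_of_add_eq_zero_left (ExteriorAlgebra.ι_add_mul_swap (Pi.single i (1:k)) u)
    simp_rw [h2]
    rw [h1, Finset.sum_neg_distrib, sub_neg_eq_add, ← Finset.mul_sum, ih]
    rw [succ_nsmul, mul_smul_comm, add_comm]

lemma cartan_pure (a b : ℕ) (f : PolyV k m)
    (hf : f ∈ MvPolynomial.homogeneousSubmodule (Fin m) k a)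
    (ω : ExtV k m) (hω : ω ∈ ⋀[k]^b (Fin m → k)) :
    dDR k m (hK k m (f ⊗ₜ[k] ω)) + hK k m (dDR k m (f ⊗ₜ[k] ω))
      = (a + b) • (f ⊗ₜ[k] ω) := by
  have hKt : ∀ (g : PolyV k m) (τ : ExtV k m), hK k m (g ⊗ₜ[k] τ)
      = ∑ i : Fin m, (MvPolynomial.X i * g) ⊗ₜ[k]
          (CliffordAlgebra.contractLeft (LinearMap.proj i) τ) := by
    intro g τ
    rw [hK, LinearMap.sum_apply]
    refine Finset.sum_congr rfl fun i _ => ?_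
    rw [TensorProduct.map_tmul, LinearMap.mulLeft_apply]
  have hDt : ∀ (g : PolyV k m) (τ : ExtV k m), dDR k m (g ⊗ₜ[k] τ)
      = ∑ j : Fin m, (MvPolynomial.pderiv j g) ⊗ₜ[k]
          (ExteriorAlgebra.ι k (Pi.single j 1) * τ) := by
    intro g τ
    rw [dDR, LinearMap.sum_apply]
    refine Finset.sum_congr rfl fun j _ => ?_
    rw [TensorProduct.map_tmul, LinearMap.mulLeft_apply]
    rfl
  rw [hKt, hDt, map_sum, map_sum]
  simp_rw [hDt, hKt]
  rw [Finset.sum_comm]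
  rw [← Finset.sum_add_distrib]
  simp_rw [← Finset.sum_add_distrib]
  have key : ∀ i j : Fin m,
      (MvPolynomial.pderiv j (MvPolynomial.X i * f)) ⊗ₜ[k]
        (ExteriorAlgebra.ι k (Pi.single j 1) *
          CliffordAlgebra.contractLeft (LinearMap.proj i) ω)
      + (MvPolynomial.X i * MvPolynomial.pderiv j f) ⊗ₜ[k]
        (CliffordAlgebra.contractLeft (LinearMap.proj i)
          (ExteriorAlgebra.ι k (Pi.single j 1) * ω))
      = if i = j then
          f ⊗ₜ[k] (ExteriorAlgebra.ι k (Pi.single i 1) *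
            CliffordAlgebra.contractLeft (LinearMap.proj i) ω)
          + (MvPolynomial.X i * MvPolynomial.pderiv i f) ⊗ₜ[k] ω
        else 0 := by
    intro i j
    rw [MvPolynomial.pderiv_mul, CliffordAlgebra.contractLeft_ι_mul]
    have hproj : (LinearMap.proj i : (Fin m → k) →ₗ[k] k) (Pi.single j 1)
        = if i = j then 1 else 0 := by
      simp [Pi.single_apply]
    rw [hproj]
    by_cases h : i = j
    · subst h
      rw [if_pos rfl, if_pos rfl, MvPolynomial.pderiv_X_self, one_mul, one_smul]
      rw [TensorProduct.add_tmul, TensorProduct.tmul_sub]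
      abel
    · rw [if_neg h, if_neg h, MvPolynomial.pderiv_X_of_ne h, zero_mul,
        zero_add, zero_smul, zero_sub, TensorProduct.tmul_neg, add_neg_cancel]
  simp_rw [key]
  simp_rw [Finset.sum_ite_eq' Finset.univ, Finset.mem_univ, if_true]
  rw [Finset.sum_add_distrib, ← TensorProduct.tmul_sum, ← TensorProduct.sum_tmul]
  rw [euler_ext k m b ω hω, euler_poly k m a f hf]
  rw [add_nsmul, add_comm]
  congr 1
  exact TensorProduct.tmul_smul b f ω

lemma cartan_diag (d : ℕ) (x : DeRham k m) (hx : x ∈ diagComp k m d) :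
    dDR k m (hK k m x) + hK k m (dDR k m x) = d • x := by
  set L : DeRham k m →ₗ[k] DeRham k m :=
    ((dDR k m) ∘ₗ (hK k m) + (hK k m) ∘ₗ (dDR k m)) - d • LinearMap.id with hL
  have hle : diagComp k m d ≤ LinearMap.ker L := by
    rw [diagComp]
    refine iSup_le fun a => iSup_le fun ha => ?_
    rintro x ⟨y, rfl⟩
    induction y using TensorProduct.induction_on with
    | zero => simp
    | tmul p q =>
        obtain ⟨p, hp⟩ := p
        obtain ⟨q, hq⟩ := q
        rw [TensorProduct.map_tmul]
        have hc := cartan_pure k m a (d - a) p hp q hq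
        rw [Nat.add_sub_cancel' ha] at hc
        rw [LinearMap.mem_ker, hL]
        simp only [LinearMap.sub_apply, LinearMap.add_apply, LinearMap.comp_apply,
          LinearMap.smul_apply, LinearMap.id_apply, Submodule.coe_subtype]
        rw [hc, sub_self]
    | add u v hu hv =>
        rw [map_add]
        exact Submodule.add_mem _ hu hv
  have h0 : L x = 0 := hle hx
  rw [hL] at h0
  simp only [LinearMap.sub_apply, LinearMap.add_apply, LinearMap.comp_apply,
    LinearMap.smul_apply, LinearMap.id_apply] at h0
  exact sub_eq_zero.mp h0

/-- over a field of characteristic `p > 0`, the De Rham cohomology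
of (the space of) a finite-dimensional vector space is concentrated in diagonal
degrees divisible by `p`: every closed form of diagonal degree not divisible by `p`
is exact. -/
theorem deRham_cohomology_in_degrees_divisible_by_p
    (p : ℕ) [Fact p.Prime] [CharP k p] (d : ℕ) (hd : ¬ p ∣ d)
    (x : DeRham k m) (hx : x ∈ diagComp k m d) (hclosed : dDR k m x = 0) :
    x ∈ LinearMap.range (dDR k m) := by
  have hc : (d : k) ≠ 0 := fun h => hd ((CharP.cast_eq_zero_iff k p d).mp h)
  have key := cartan_diag k m d x hx
  rw [hclosed, map_zero, add_zero] at key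
  refine ⟨(d : k)⁻¹ • hK k m x, ?_⟩
  rw [map_smul, key, ← Nat.cast_smul_eq_nsmul k d x, smul_smul, inv_mul_cancel₀ hc, one_smul]

end
end
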